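/- Suppose that for some i ∈ I the adjoint L_i* : G_i → H is surjective and the set {y − F_i y : y ∈ G_i} is bounded. Then the relaxed problem has a solution: there exists x ∈ C such that Σ_{j∈I} ω_j ⟪L_j(y − x), F_j(L_j x) − p_j⟫ ≥ 0 for every y ∈ C. -/

import Mathlib

/-!
The relaxed problem is the variational inequality `0 ≤ ⟪A x, y - x⟫` on `C` for
`A x = ∑ ωⱼ Lⱼ* (Fⱼ (Lⱼ x) - pⱼ)`. This operator is monotone and Lipschitz, and its `i`-th
summand makes it coercive: surjectivity of `Lᵢ*` gives `‖z‖ ≤ c ‖Lᵢ z‖`, and a displacement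
bound `‖u - Fᵢ u‖ ≤ M` gives `⟪Fᵢ u - Fᵢ v, u - v⟫ ≥ ‖u - v‖² - 2M ‖u - v‖`.

The regularized operators `A + ε (· - x₀)` are strongly monotone, so their inequalities are
solved by fixed points of the contraction `x ↦ P_C (x - γ (A x + ε (x - x₀)))`, and coercivity
keeps these solutions in a fixed ball. They are `ε`-approximate solutions of Minty's dual
inequality `⟪A y, x - y⟫ ≤ 0`, so the sets of such approximate solutions form a decreasing
sequence of nonempty bounded closed convex sets. In a Hilbert space these have a common point
(the minimal-norm points form a Cauchy sequence); it solves Minty's inequality exactly, and by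
continuity of `A` it solves the original one.
-/

open RealInnerProductSpace

open Filter Topology
open scoped InnerProduct NNReal

section FirmlyNonexpansive

variable {E : Type*} [NormedAddCommGroup E] [InnerProductSpace ℝ E]

def IsFirmlyNonexpansive (F : E → E) : Prop :=
  ∀ u v, ‖F u - F v‖ ^ 2 ≤ ⟪u - v, F u - F v⟫

namespace IsFirmlyNonexpansive

variable {F : E → E}

lemma inner_sub_nonneg (hF : IsFirmlyNonexpansive F) (u v : E) :
    0 ≤ ⟪F u - F v, u - v⟫ :=
  real_inner_comm (F u - F v) (u - v) ▸ (sq_nonneg _).trans (hF u v)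

lemma lipschitzWith_one (hF : IsFirmlyNonexpansive F) : LipschitzWith 1 F := by
  refine LipschitzWith.of_dist_le_mul fun u v => ?_
  rw [NNReal.coe_one, one_mul, dist_eq_norm, dist_eq_norm]
  have h : ‖F u - F v‖ ^ 2 ≤ ‖u - v‖ * ‖F u - F v‖ :=
    (hF u v).trans (real_inner_le_norm _ _)
  nlinarith [norm_nonneg (F u - F v), norm_nonneg (u - v)]

end IsFirmlyNonexpansive

end FirmlyNonexpansive

section Projection

variable {E : Type*} [NormedAddCommGroup E] [InnerProductSpace ℝ E] {C : Set E}

lemma exists_mem_forall_inner_sub_nonpos (hne : C.Nonempty) (hcom : IsComplete C)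
    (hcv : Convex ℝ C) (u : E) : ∃ v ∈ C, ∀ w ∈ C, ⟪u - v, w - v⟫ ≤ 0 := by
  obtain ⟨v, hv, hmin⟩ := exists_norm_eq_iInf_of_complete_convex hne hcom hcv u
  exact ⟨v, hv, (norm_eq_iInf_iff_real_inner_le_zero hcv hv).1 hmin⟩

lemma isFirmlyNonexpansive_of_forall_inner_sub_nonpos {P : E → E} (hPC : ∀ u, P u ∈ C)
    (hP : ∀ u, ∀ w ∈ C, ⟪u - P u, w - P u⟫ ≤ 0) : IsFirmlyNonexpansive P := by
  intro u v
  have hu := hP u (P v) (hPC v)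
  have hv := hP v (P u) (hPC u)
  have key : ⟪u - v, P u - P v⟫ - ‖P u - P v‖ ^ 2
      = -⟪u - P u, P v - P u⟫ - ⟪v - P v, P u - P v⟫ := by
    rw [← real_inner_self_eq_norm_sq, ← inner_sub_left, ← inner_neg_right, neg_sub,
      ← inner_sub_left]
    congr 1
    abel
  linarith

end Projection

section VariationalInequality

variable {E : Type*} [NormedAddCommGroup E] [InnerProductSpace ℝ E] {C : Set E}

lemma exists_contractingWith_sub_smul {B : E → E} {K : ℝ≥0} (hB : LipschitzWith K B) {ε : ℝ}
    (hε : 0 < ε) (hB_mono : ∀ x y, ε * ‖x - y‖ ^ 2 ≤ ⟪B x - B y, x - y⟫) :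
    ∃ γ > (0 : ℝ), ∃ k, ContractingWith k fun x => x - γ • B x := by
  -- `γ (K² + ε²) = ε` makes the squared step ratio at most `1 - γε ≤ (1 - γε / 2)²`
  set γ := ε / ((K : ℝ) ^ 2 + ε ^ 2)
  have hγ : 0 < γ := by positivity
  have hγK : γ * ((K : ℝ) ^ 2 + ε ^ 2) = ε := div_mul_cancel₀ _ (by positivity)
  have hγK' : 0 ≤ γ * (K : ℝ) ^ 2 := by positivity
  have hγε : γ * ε ≤ 1 := by nlinarith
  have hγε' : 0 < γ * ε := mul_pos hγ hε
  refine ⟨γ, hγ, _, Real.toNNReal_lt_one.2 (by linarith : 1 - γ * ε / 2 < 1),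
    LipschitzWith.of_dist_le' fun x y => ?_⟩
  rw [dist_eq_norm, dist_eq_norm]
  have hlip := hB.norm_sub_le x y
  have hmono := hB_mono x y
  have hexpand : ‖x - γ • B x - (y - γ • B y)‖ ^ 2
      = ‖x - y‖ ^ 2 - 2 * γ * ⟪B x - B y, x - y⟫ + γ ^ 2 * ‖B x - B y‖ ^ 2 := by
    rw [show x - γ • B x - (y - γ • B y) = (x - y) - γ • (B x - B y) by
        rw [smul_sub]; abel,
      norm_sub_sq_real, real_inner_smul_right, norm_smul, Real.norm_of_nonneg hγ.le,
      real_inner_comm]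
    ring
  have hsq : ‖x - γ • B x - (y - γ • B y)‖ ^ 2 ≤ ((1 - γ * ε / 2) * ‖x - y‖) ^ 2 := by
    have hlip2 : ‖B x - B y‖ ^ 2 ≤ (K : ℝ) ^ 2 * ‖x - y‖ ^ 2 := by
      rw [← mul_pow]; exact pow_le_pow_left₀ (norm_nonneg _) hlip 2
    have h1 := mul_le_mul_of_nonneg_left hmono (by positivity : (0 : ℝ) ≤ 2 * γ)
    have h2 := mul_le_mul_of_nonneg_left hlip2 (by positivity : (0 : ℝ) ≤ γ ^ 2)
    have h3 : γ ^ 2 * ((K : ℝ) ^ 2 * ‖x - y‖ ^ 2) = (γ * ε - (γ * ε) ^ 2) * ‖x - y‖ ^ 2 := by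
      linear_combination γ * ‖x - y‖ ^ 2 * hγK
    nlinarith [sq_nonneg (γ * ε * ‖x - y‖)]
  exact le_of_pow_le_pow_left₀ two_ne_zero
    (mul_nonneg (by linarith) (norm_nonneg _)) hsq

lemma exists_forall_inner_nonneg_of_strongly_monotone [CompleteSpace E] (hCne : C.Nonempty)
    (hCcl : IsClosed C) (hCcv : Convex ℝ C) {B : E → E} {K : ℝ≥0} (hB : LipschitzWith K B)
    {ε : ℝ} (hε : 0 < ε) (hB_mono : ∀ x y, ε * ‖x - y‖ ^ 2 ≤ ⟪B x - B y, x - y⟫) :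
    ∃ x ∈ C, ∀ y ∈ C, 0 ≤ ⟪B x, y - x⟫ := by
  choose P hPC hP using exists_mem_forall_inner_sub_nonpos hCne hCcl.isComplete hCcv
  obtain ⟨γ, hγ, k, hk⟩ := exists_contractingWith_sub_smul hB hε hB_mono
  -- a fixed point of the projected step `x ↦ P (x - γ • B x)` solves the inequality
  have hcontr : ContractingWith k (P ∘ fun x => x - γ • B x) := by
    refine ⟨hk.1, ?_⟩
    simpa using
      (isFirmlyNonexpansive_of_forall_inner_sub_nonpos hPC hP).lipschitzWith_one.comp hk.2
  obtain ⟨x, hx, -⟩ := hcontr.exists_fixedPoint 0 (edist_ne_top _ _)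
  have hx : P (x - γ • B x) = x := hx
  refine ⟨x, hx ▸ hPC _, fun y hy => ?_⟩
  have h := hP (x - γ • B x) y hy
  rw [hx, sub_sub_cancel_left, inner_neg_left, real_inner_smul_left] at h
  exact nonneg_of_mul_nonneg_right (by linarith) hγ

lemma forall_inner_nonneg_of_minty (hCcv : Convex ℝ C) {A : E → E} (hA : Continuous A) {x : E}
    (hx : x ∈ C) (hminty : ∀ y ∈ C, ⟪A y, x - y⟫ ≤ 0) : ∀ y ∈ C, 0 ≤ ⟪A x, y - x⟫ := by
  intro y hy
  set f : ℝ → ℝ := fun t => ⟪A (x + t • (y - x)), y - x⟫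
  have hf : Tendsto f (𝓝[>] 0) (𝓝 ⟪A x, y - x⟫) := by
    have : Continuous f := by fun_prop
    simpa [f] using (this.tendsto 0).mono_left nhdsWithin_le_nhds
  refine ge_of_tendsto hf (eventually_of_mem (Ioc_mem_nhdsGT one_pos) fun t ht => ?_)
  have h := hminty _ (hCcv.add_smul_sub_mem hx hy (Set.Ioc_subset_Icc_self ht))
  rw [sub_add_cancel_left, inner_neg_right, real_inner_smul_right] at h
  exact nonneg_of_mul_nonneg_right (by linarith) ht.1

end VariationalInequality

section NestedConvex

variable {E : Type*} [NormedAddCommGroup E] [InnerProductSpace ℝ E] [CompleteSpace E]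

theorem nonempty_iInter_of_antitone_of_convex {D : ℕ → Set E} (hD : Antitone D)
    (hne : ∀ n, (D n).Nonempty) (hcl : ∀ n, IsClosed (D n)) (hcv : ∀ n, Convex ℝ (D n))
    (hbdd : Bornology.IsBounded (D 0)) : (⋂ n, D n).Nonempty := by
  choose v hv hv_min using fun n =>
    exists_mem_forall_inner_sub_nonpos (hne n) (hcl n).isComplete (hcv n) 0
  -- `v n` is the minimal-norm point of `D n`; since `v m ∈ D n` for `n ≤ m`, the norms
  -- increase and their increments control the distances
  have hdist : ∀ {n m}, n ≤ m → ‖v m - v n‖ ^ 2 ≤ ‖v m‖ ^ 2 - ‖v n‖ ^ 2 := by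
    intro n m hnm
    have h := hv_min n (v m) (hD hnm (hv m))
    rw [zero_sub, inner_neg_left] at h
    have := norm_add_sq_real (v n) (v m - v n)
    rw [add_sub_cancel] at this
    linarith
  have hmono : Monotone fun n => ‖v n‖ ^ 2 := fun n m hnm =>
    sub_nonneg.1 ((sq_nonneg _).trans (hdist hnm))
  obtain ⟨r, hr⟩ := isBounded_iff_forall_norm_le.1 hbdd
  have hbddAbove : BddAbove (Set.range fun n => ‖v n‖ ^ 2) := by
    refine ⟨r ^ 2, Set.forall_mem_range.2 fun n => ?_⟩
    exact pow_le_pow_left₀ (norm_nonneg _) (hr _ (hD (Nat.zero_le n) (hv n))) 2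
  have hcauchy : CauchySeq v := by
    have hsq := (tendsto_atTop_ciSup hmono hbddAbove).cauchySeq
    refine Metric.cauchySeq_iff'.2 fun ε hε => ?_
    obtain ⟨N, hN⟩ := Metric.cauchySeq_iff'.1 hsq (ε ^ 2) (by positivity)
    refine ⟨N, fun n hn => ?_⟩
    have h := (hdist hn).trans_lt ((le_abs_self _).trans_lt (hN n hn))
    rw [dist_eq_norm]
    exact lt_of_pow_lt_pow_left₀ 2 hε.le h
  obtain ⟨x, hx⟩ := cauchySeq_tendsto_of_complete hcauchy
  exact ⟨x, Set.mem_iInter.2 fun n => (hcl n).mem_of_tendsto hx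
    (eventually_atTop.2 ⟨n, fun m hm => hD hm (hv m)⟩)⟩

end NestedConvex

section Coercive

variable {E : Type*} [NormedAddCommGroup E] [InnerProductSpace ℝ E] {C : Set E}

theorem exists_minty_solution_of_approx [CompleteSpace E] (hCcl : IsClosed C)
    (hCcv : Convex ℝ C) {A : E → E} {x₀ : E} {R : ℝ} {K : E → ℝ} (hK : ∀ y, 0 ≤ K y)
    (happrox : ∀ ε > 0, ∃ x ∈ C, ‖x - x₀‖ ≤ R ∧ ∀ y ∈ C, ⟪A y, x - y⟫ ≤ ε * K y) :
    ∃ x ∈ C, ∀ y ∈ C, ⟪A y, x - y⟫ ≤ 0 := by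
  set D : ℕ → Set E := fun n => C ∩ Metric.closedBall x₀ R ∩
    ⋂ y ∈ C, {x | ⟪A y, x⟫ ≤ 1 / (n + 1) * K y + ⟪A y, y⟫}
  have hmem : ∀ n x, x ∈ D n ↔
      x ∈ C ∧ ‖x - x₀‖ ≤ R ∧ ∀ y ∈ C, ⟪A y, x - y⟫ ≤ 1 / (n + 1) * K y := by
    simp [D, inner_sub_right, dist_eq_norm, and_assoc]
  have hD : Antitone D := fun n m hnm x hx => by
    rw [hmem] at hx ⊢
    exact ⟨hx.1, hx.2.1, fun y hy => (hx.2.2 y hy).trans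
      (mul_le_mul_of_nonneg_right (Nat.one_div_le_one_div hnm) (hK y))⟩
  have hne : ∀ n, (D n).Nonempty := fun n => by
    obtain ⟨x, hx⟩ := happrox _ Nat.one_div_pos_of_nat
    exact ⟨x, (hmem n x).2 hx⟩
  have hcl : ∀ n, IsClosed (D n) := fun n =>
    (hCcl.inter Metric.isClosed_closedBall).inter
      (isClosed_biInter fun y _ => isClosed_le (by fun_prop) continuous_const)
  have hcv : ∀ n, Convex ℝ (D n) := fun n =>
    (hCcv.inter (convex_closedBall _ _)).inter
      (convex_iInter₂ fun y _ => convex_halfSpace_le (innerₛₗ ℝ (A y)).isLinear _)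
  obtain ⟨x, hx⟩ := nonempty_iInter_of_antitone_of_convex hD hne hcl hcv
    (Metric.isBounded_closedBall.subset fun x hx => hx.1.2)
  have hxD : ∀ n, x ∈ D n := Set.mem_iInter.1 hx
  refine ⟨x, ((hmem 0 x).1 (hxD 0)).1, fun y hy => ?_⟩
  simpa using ge_of_tendsto' (tendsto_one_div_add_atTop_nhds_zero_nat.mul_const (K y))
    fun n => ((hmem n x).1 (hxD n)).2.2 y hy

lemma norm_sub_le_of_coercive {B : E → E} {x₀ x : E} {α β : ℝ} (hα : 0 < α) (hβ : 0 ≤ β)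
    (hcoer : α * ‖x - x₀‖ ^ 2 - β * ‖x - x₀‖ ≤ ⟪B x - B x₀, x - x₀⟫)
    (hx : 0 ≤ ⟪B x, x₀ - x⟫) : ‖x - x₀‖ ≤ (β + ‖B x₀‖) / α := by
  have h : ⟪B x, x₀ - x⟫ = -⟪B x - B x₀, x - x₀⟫ - ⟪B x₀, x - x₀⟫ := by
    rw [← neg_sub x, inner_neg_right, inner_sub_left]
    ring
  have hCS := neg_le_of_abs_le (abs_real_inner_le_norm (B x₀) (x - x₀))
  have hquad : α * ‖x - x₀‖ ^ 2 ≤ (β + ‖B x₀‖) * ‖x - x₀‖ := by linarith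
  rw [le_div_iff₀ hα]
  nlinarith [norm_nonneg (x - x₀), norm_nonneg (B x₀)]

theorem exists_forall_inner_nonneg_of_coercive [CompleteSpace E] (hCcl : IsClosed C)
    (hCcv : Convex ℝ C) {A : E → E} {K : ℝ≥0} (hA : LipschitzWith K A)
    (hA_mono : ∀ x y, 0 ≤ ⟪A x - A y, x - y⟫) {x₀ : E} (hx₀ : x₀ ∈ C) {α β : ℝ}
    (hα : 0 < α) (hβ : 0 ≤ β)
    (hcoer : ∀ x, α * ‖x - x₀‖ ^ 2 - β * ‖x - x₀‖ ≤ ⟪A x - A x₀, x - x₀⟫) :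
    ∃ x ∈ C, ∀ y ∈ C, 0 ≤ ⟪A x, y - x⟫ := by
  set R := (β + ‖A x₀‖) / α
  have hR : 0 ≤ R := by positivity
  suffices ∀ ε > 0, ∃ x ∈ C, ‖x - x₀‖ ≤ R ∧ ∀ y ∈ C, ⟪A y, x - y⟫ ≤ ε * (R * (‖y - x₀‖ + R)) by
    obtain ⟨x, hxC, hx⟩ := exists_minty_solution_of_approx hCcl hCcv (fun y => by positivity) this
    exact ⟨x, hxC, forall_inner_nonneg_of_minty hCcv hA.continuous hxC hx⟩
  intro ε hε
  -- Tikhonov regularization towards `x₀`: strongly monotone, with the same coercivity at `x₀`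
  set B := fun x => A x + ε • (x - x₀)
  have hB_inner : ∀ x y, ⟪B x - B y, x - y⟫ = ⟪A x - A y, x - y⟫ + ε * ‖x - y‖ ^ 2 := by
    intro x y
    rw [show B x - B y = (A x - A y) + ε • (x - y) by simp only [B, smul_sub]; abel,
      inner_add_left, real_inner_smul_left, real_inner_self_eq_norm_sq]
  have hB : LipschitzWith (K + ‖ε‖₊ * (1 + 0)) B :=
    hA.add ((lipschitzWith_smul ε).comp (LipschitzWith.id.sub (LipschitzWith.const x₀)))
  obtain ⟨x, hxC, hx⟩ := exists_forall_inner_nonneg_of_strongly_monotone ⟨x₀, hx₀⟩ hCcl hCcv hB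
    hε fun x y => by rw [hB_inner]; linarith [hA_mono x y]
  have hxR : ‖x - x₀‖ ≤ R := by
    have h := norm_sub_le_of_coercive hα hβ (by rw [hB_inner]; nlinarith [hcoer x]) (hx x₀ hx₀)
    simpa [B] using h
  refine ⟨x, hxC, hxR, fun y hy => ?_⟩
  have hxy := hx y hy
  rw [inner_add_left, real_inner_smul_left] at hxy
  calc ⟪A y, x - y⟫ ≤ ⟪A x, x - y⟫ := by
        linarith [hA_mono x y, inner_sub_left (𝕜 := ℝ) (A x) (A y) (x - y)]
    _ ≤ ε * ⟪x - x₀, y - x⟫ := by rw [← neg_sub y, inner_neg_right]; linarith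
    _ ≤ ε * (‖x - x₀‖ * ‖y - x‖) := by gcongr; exact real_inner_le_norm _ _
    _ ≤ ε * (R * (‖y - x₀‖ + R)) := by
      have : ‖y - x‖ ≤ ‖y - x₀‖ + R := (norm_sub_le_norm_sub_add_norm_sub y x₀ x).trans
        (by rw [norm_sub_rev x₀]; linarith)
      gcongr

end Coercive

lemma ContinuousLinearMap.exists_norm_le_mul_norm_of_surjective_adjoint
    {E F : Type*} [NormedAddCommGroup E] [InnerProductSpace ℝ E] [CompleteSpace E]
    [NormedAddCommGroup F] [InnerProductSpace ℝ F] [CompleteSpace F] (T : E →L[ℝ] F)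
    (hT : Function.Surjective (T†)) : ∃ c > 0, ∀ z, ‖z‖ ≤ c * ‖T z‖ := by
  obtain ⟨c, hc, hpre⟩ := (T†).exists_preimage_norm_le hT
  refine ⟨c, hc, fun z => ?_⟩
  obtain ⟨u, rfl, hu⟩ := hpre z
  set z := (T†) u
  rcases (norm_nonneg z).eq_or_lt with h | h
  · rw [← h]; positivity
  refine le_of_mul_le_mul_left ?_ h
  calc ‖z‖ * ‖z‖ = ⟪u, T z⟫ := by
        rw [← ContinuousLinearMap.adjoint_inner_left, real_inner_self_eq_norm_mul_norm]
    _ ≤ ‖u‖ * ‖T z‖ := real_inner_le_norm _ _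
    _ ≤ c * ‖z‖ * ‖T z‖ := by gcongr
    _ = ‖z‖ * (c * ‖T z‖) := by ring

lemma sq_sub_le_inner_of_norm_sub_apply_le {G : Type*} [NormedAddCommGroup G]
    [InnerProductSpace ℝ G] {F : G → G} {M : ℝ} (hM : ∀ u, ‖u - F u‖ ≤ M) (u v : G) :
    ‖u - v‖ ^ 2 - 2 * M * ‖u - v‖ ≤ ⟪F u - F v, u - v⟫ := by
  have h : ⟪F u - F v, u - v⟫ = ‖u - v‖ ^ 2 - ⟪(u - F u) - (v - F v), u - v⟫ := by
    rw [← real_inner_self_eq_norm_sq, ← inner_sub_left]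
    congr 1
    abel
  have hdisp := (real_inner_le_norm ((u - F u) - (v - F v)) (u - v)).trans
    (mul_le_mul_of_nonneg_right ((norm_sub_le _ _).trans (add_le_add (hM u) (hM v)))
      (norm_nonneg _))
  linarith

section RelaxedOperator

variable {H : Type*} [NormedAddCommGroup H] [InnerProductSpace ℝ H] [CompleteSpace H]
  {I : Type*} [Fintype I] {G : I → Type*} [∀ i, NormedAddCommGroup (G i)]
  [∀ i, InnerProductSpace ℝ (G i)] [∀ i, CompleteSpace (G i)]
  (ω : I → ℝ) (L : ∀ i, H →L[ℝ] G i) (F : ∀ i, G i → G i) (p : ∀ i, G i)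

noncomputable def relaxedOperator (x : H) : H :=
  ∑ j, ω j • ((L j)†) (F j (L j x) - p j)

lemma inner_relaxedOperator (x z : H) :
    ⟪relaxedOperator ω L F p x, z⟫ = ∑ j, ω j * ⟪L j z, F j (L j x) - p j⟫ := by
  simp only [relaxedOperator, sum_inner, real_inner_smul_left,
    ContinuousLinearMap.adjoint_inner_left, real_inner_comm (L _ z)]

lemma relaxedOperator_sub (x y : H) :
    relaxedOperator ω L F p x - relaxedOperator ω L F p y
      = ∑ j, ω j • ((L j)†) (F j (L j x) - F j (L j y)) := by
  simp only [relaxedOperator, ← Finset.sum_sub_distrib, ← smul_sub, ← map_sub,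
    sub_sub_sub_cancel_right]

lemma inner_relaxedOperator_sub (x y : H) :
    ⟪relaxedOperator ω L F p x - relaxedOperator ω L F p y, x - y⟫
      = ∑ j, ω j * ⟪F j (L j x) - F j (L j y), L j x - L j y⟫ := by
  rw [relaxedOperator_sub, sum_inner]
  refine Finset.sum_congr rfl fun j _ => ?_
  rw [real_inner_smul_left, ContinuousLinearMap.adjoint_inner_left, map_sub]

variable {ω F}

lemma relaxedOperator_monotone (hω : ∀ j, 0 ≤ ω j) (hF : ∀ j, IsFirmlyNonexpansive (F j))
    (x y : H) : 0 ≤ ⟪relaxedOperator ω L F p x - relaxedOperator ω L F p y, x - y⟫ := by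
  rw [inner_relaxedOperator_sub]
  exact Finset.sum_nonneg fun j _ => mul_nonneg (hω j) ((hF j).inner_sub_nonneg _ _)

lemma lipschitzWith_relaxedOperator (hω : ∀ j, 0 ≤ ω j) (hF : ∀ j, LipschitzWith 1 (F j)) :
    LipschitzWith (∑ j, ω j * ‖L j‖ ^ 2).toNNReal (relaxedOperator ω L F p) := by
  refine LipschitzWith.of_dist_le' fun x y => ?_
  rw [dist_eq_norm, dist_eq_norm, relaxedOperator_sub, Finset.sum_mul]
  refine (norm_sum_le _ _).trans (Finset.sum_le_sum fun j _ => ?_)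
  have hFj : ‖F j (L j x) - F j (L j y)‖ ≤ ‖L j‖ * ‖x - y‖ :=
    calc ‖F j (L j x) - F j (L j y)‖ ≤ ‖L j x - L j y‖ := by
          simpa using (hF j).norm_sub_le (L j x) (L j y)
      _ ≤ ‖L j‖ * ‖x - y‖ := by rw [← map_sub]; exact (L j).le_opNorm _
  have hadj := ((L j)†).le_opNorm (F j (L j x) - F j (L j y))
  rw [ContinuousLinearMap.adjoint.norm_map] at hadj
  calc ‖ω j • ((L j)†) (F j (L j x) - F j (L j y))‖
      ≤ ω j * (‖L j‖ * (‖L j‖ * ‖x - y‖)) := by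
        rw [norm_smul, Real.norm_of_nonneg (hω j)]
        exact mul_le_mul_of_nonneg_left
          (hadj.trans (mul_le_mul_of_nonneg_left hFj (norm_nonneg _))) (hω j)
    _ = ω j * ‖L j‖ ^ 2 * ‖x - y‖ := by ring

lemma relaxedOperator_coercive (hω : ∀ j, 0 ≤ ω j) (hF : ∀ j, IsFirmlyNonexpansive (F j))
    {i : I} {c M : ℝ} (hc : 0 < c) (hlow : ∀ z, ‖z‖ ≤ c * ‖L i z‖)
    (hM : ∀ u, ‖u - F i u‖ ≤ M) (x y : H) :
    ω i / c ^ 2 * ‖x - y‖ ^ 2 - ω i * (2 * M * ‖L i‖) * ‖x - y‖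
      ≤ ⟪relaxedOperator ω L F p x - relaxedOperator ω L F p y, x - y⟫ := by
  have hterm : ω i * ⟪F i (L i x) - F i (L i y), L i x - L i y⟫
      ≤ ⟪relaxedOperator ω L F p x - relaxedOperator ω L F p y, x - y⟫ := by
    rw [inner_relaxedOperator_sub]
    exact Finset.single_le_sum
      (fun j _ => mul_nonneg (hω j) ((hF j).inner_sub_nonneg (L j x) (L j y)))
      (Finset.mem_univ i)
  have hdisp := sq_sub_le_inner_of_norm_sub_apply_le hM (L i x) (L i y)
  have hM₀ : 0 ≤ M := (norm_nonneg _).trans (hM 0)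
  have hts : ‖x - y‖ ≤ c * ‖L i x - L i y‖ := by rw [← map_sub]; exact hlow _
  have hst : ‖L i x - L i y‖ ≤ ‖L i‖ * ‖x - y‖ := by rw [← map_sub]; exact (L i).le_opNorm _
  set t := ‖x - y‖
  set s := ‖L i x - L i y‖
  have hsq : t ^ 2 / c ^ 2 ≤ s ^ 2 := by
    rw [div_le_iff₀ (by positivity), ← mul_pow, mul_comm]
    exact pow_le_pow_left₀ (norm_nonneg _) hts 2
  have hlin : M * s ≤ M * (‖L i‖ * t) := mul_le_mul_of_nonneg_left hst hM₀
  calc ω i / c ^ 2 * t ^ 2 - ω i * (2 * M * ‖L i‖) * t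
      = ω i * (t ^ 2 / c ^ 2 - 2 * M * (‖L i‖ * t)) := by ring
    _ ≤ ω i * (s ^ 2 - 2 * M * s) := mul_le_mul_of_nonneg_left (by linarith) (hω i)
    _ ≤ ω i * ⟪F i (L i x) - F i (L i y), L i x - L i y⟫ :=
        mul_le_mul_of_nonneg_left hdisp (hω i)
    _ ≤ _ := hterm

end RelaxedOperator

theorem relaxed_has_solution_of_bounded_displacement_general
    {H : Type*} [NormedAddCommGroup H] [InnerProductSpace ℝ H] [CompleteSpace H]
    {I : Type*} [Fintype I]
    (G : I → Type*) [∀ i, NormedAddCommGroup (G i)] [∀ i, InnerProductSpace ℝ (G i)]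
    [∀ i, CompleteSpace (G i)]
    (ω : I → ℝ) (hω : ∀ i, ω i ∈ Set.Ioo (0 : ℝ) 1)
    (C : Set H) (hCne : C.Nonempty) (hCcl : IsClosed C) (hCcv : Convex ℝ C)
    (p : ∀ i, G i) (L : ∀ i, H →L[ℝ] G i)
    (F : ∀ i, G i → G i)
    (hF : ∀ i, ∀ u v : G i, ⟪u - v, F i u - F i v⟫ ≥ ‖F i u - F i v‖ ^ 2)
    (i : I) (hadj : Function.Surjective (ContinuousLinearMap.adjoint (L i)))
    (hbdd : Bornology.IsBounded (Set.range fun y : G i => y - F i y)) :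
    ∃ x ∈ C, ∀ y ∈ C, (∑ i, ω i * ⟪L i (y - x), F i (L i x) - p i⟫) ≥ 0 := by
  obtain ⟨x₀, hx₀⟩ := hCne
  have hω₀ : ∀ j, 0 ≤ ω j := fun j => (hω j).1.le
  have hF' : ∀ j, IsFirmlyNonexpansive (F j) := hF
  obtain ⟨c, hc, hlow⟩ := (L i).exists_norm_le_mul_norm_of_surjective_adjoint hadj
  obtain ⟨M, hM⟩ := isBounded_iff_forall_norm_le.1 hbdd
  have hM' : ∀ u, ‖u - F i u‖ ≤ M := fun u => hM _ ⟨u, rfl⟩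
  have hM₀ : 0 ≤ M := (norm_nonneg _).trans (hM' 0)
  have hβ : 0 ≤ ω i * (2 * M * ‖L i‖) := mul_nonneg (hω₀ i) (by positivity)
  obtain ⟨x, hxC, hx⟩ := exists_forall_inner_nonneg_of_coercive hCcl hCcv
    (lipschitzWith_relaxedOperator L p hω₀ fun j => (hF' j).lipschitzWith_one)
    (relaxedOperator_monotone L p hω₀ hF') hx₀ (div_pos (hω i).1 (pow_pos hc 2)) hβ
    fun x => relaxedOperator_coercive L p hω₀ hF' hc hlow hM' x x₀
  refine ⟨x, hxC, fun y hy => ?_⟩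
  rw [ge_iff_le, ← inner_relaxedOperator]
  exact hx y hy

/-- If for some `i`, `Lᵢ*` is surjective and `ran (Id - Fᵢ)` is bounded, the relaxed
variational inequality problem has a solution. -/
theorem relaxed_has_solution_of_bounded_displacement
    {H : Type*} [NormedAddCommGroup H] [InnerProductSpace ℝ H] [CompleteSpace H]
    {I : Type*} [Fintype I] [Nonempty I]
    (G : I → Type*) [∀ i, NormedAddCommGroup (G i)] [∀ i, InnerProductSpace ℝ (G i)]
    [∀ i, CompleteSpace (G i)]
    (ω : I → ℝ) (hω : ∀ i, ω i ∈ Set.Ioo (0 : ℝ) 1) (hωsum : ∑ i, ω i = 1)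
    (C : Set H) (hCne : C.Nonempty) (hCcl : IsClosed C) (hCcv : Convex ℝ C)
    (p : ∀ i, G i) (L : ∀ i, H →L[ℝ] G i) (hL : ∀ i, L i ≠ 0)
    (F : ∀ i, G i → G i)
    (hF : ∀ i, ∀ u v : G i, ⟪u - v, F i u - F i v⟫ ≥ ‖F i u - F i v‖ ^ 2)
    (i : I) (hadj : Function.Surjective (ContinuousLinearMap.adjoint (L i)))
    (hbdd : Bornology.IsBounded (Set.range fun y : G i => y - F i y)) :
    ∃ x ∈ C, ∀ y ∈ C, (∑ i, ω i * ⟪L i (y - x), F i (L i x) - p i⟫) ≥ 0 :=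
  relaxed_has_solution_of_bounded_displacement_general G ω hω C hCne hCcl hCcv p L F hF i hadj hbdd
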